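/- Let D be a positive integer, r ∈ [1,∞), and let Ω = [0,1]^D with the Euclidean metric. There exists a constant c_r > 0 depending only on r such that for every integer n ≥ 2, inf_{P̂} sup_{P} E_{X_1,…,X_n ∼ P^n}[ W_r^r(P, P̂(X_1,…,X_n)) ] ≥ c_r · max{ n^{−r/D}, D^{r/2} · n^{−1/2} }, where the supremum is over all Borel probability measures P on [0,1]^D and the infimum is over all (possibly randomized) measurable estimators P̂ : Ω^n → {Borel probability measures on Ω}. -/

import Mathlib

open MeasureTheory ENNReal

noncomputable section

/-- The set of couplings of two measures. -/
def couplings {Ω : Type*} [MeasurableSpace Ω] (P Q : Measure Ω) : Set (Measure (Ω × Ω)) :=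
  {μ | μ.map Prod.fst = P ∧ μ.map Prod.snd = Q}

/-- `W_r^r(P,Q)`, the `r`-th power of the `r`-Wasserstein distance. -/
def wassersteinPow {Ω : Type*} [MeasurableSpace Ω] [PseudoEMetricSpace Ω] (r : ℝ)
    (P Q : Measure Ω) : ℝ≥0∞ :=
  ⨅ μ ∈ couplings P Q, ∫⁻ p : Ω × Ω, edist p.1 p.2 ^ r ∂μ

/-- The `r`-Wasserstein distance. -/
def wasserstein {Ω : Type*} [MeasurableSpace Ω] [PseudoEMetricSpace Ω] (r : ℝ)
    (P Q : Measure Ω) : ℝ≥0∞ :=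
  (wassersteinPow r P Q) ^ (1 / r)

/-- The empirical measure of `n` samples. -/
def empiricalMeasure {Ω : Type*} [MeasurableSpace Ω] (n : ℕ) (x : Fin n → Ω) : Measure Ω :=
  (n : ℝ≥0∞)⁻¹ • ∑ i : Fin n, Measure.dirac (x i)

/-- `𝒮` is a countable-or-not Borel partition of the set `B`. -/
def IsBorelPartitionOf {Ω : Type*} [MeasurableSpace Ω] (𝒮 : Set (Set Ω)) (B : Set Ω) : Prop :=
  (∀ S ∈ 𝒮, MeasurableSet S) ∧ ⋃₀ 𝒮 = B ∧ 𝒮.PairwiseDisjoint id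

/-- The resolution of a partition: the largest diameter of any of its elements. -/
def partRes {Ω : Type*} [PseudoEMetricSpace Ω] (𝒮 : Set (Set Ω)) : ℝ≥0∞ :=
  ⨆ S ∈ 𝒮, EMetric.diam S

/-- The `ε`-covering number of a Borel set `B`: the minimal cardinality of a countable
Borel partition of `B` all of whose elements have diameter at most `ε`. -/
def coveringNumber {Ω : Type*} [MeasurableSpace Ω] [PseudoEMetricSpace Ω]
    (B : Set Ω) (ε : ℝ) : ℝ≥0∞ :=
  ⨅ (𝒮 : Set (Set Ω)) (_ : IsBorelPartitionOf 𝒮 B ∧ 𝒮.Countable ∧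
      ∀ S ∈ 𝒮, EMetric.diam S ≤ ENNReal.ofReal ε), (𝒮.encard : ℝ≥0∞)

/-- The separation of a set: the smallest distance between distinct points. -/
def eSep {Ω : Type*} [PseudoEMetricSpace Ω] (S : Set Ω) : ℝ≥0∞ :=
  ⨅ (x ∈ S) (y ∈ S) (_ : x ≠ y), edist x y

/-- `|a - b|` for extended nonnegative reals. -/
def ennrDiff (a b : ℝ≥0∞) : ℝ≥0∞ := (a - b) + (b - a)

/-- The `ℓ`-th metric moment of `P` about `x₀`. -/
def metricMoment {Ω : Type*} [MeasurableSpace Ω] [PseudoEMetricSpace Ω]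
    (P : Measure Ω) (x₀ : Ω) (ℓ : ℝ) : ℝ≥0∞ :=
  (∫⁻ y, edist x₀ y ^ ℓ ∂P) ^ (1 / ℓ)

end

/-- The unit cube `[0,1]^D` with the Euclidean metric. -/
def unitCube (D : ℕ) : Type :=
  {x : EuclideanSpace ℝ (Fin D) // ∀ i, x i ∈ Set.Icc (0 : ℝ) 1}

noncomputable instance (D : ℕ) : MetricSpace (unitCube D) := by
  unfold unitCube; infer_instance

noncomputable instance (D : ℕ) : MeasurableSpace (unitCube D) := borel _

instance (D : ℕ) : BorelSpace (unitCube D) := ⟨rfl⟩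

/-!
Both rates come from Assouad's lemma. Take `2m` points `z (k, b)` of the cube, pairwise at
distance at least `2e`, and for `θ ∈ {0,1}^m` let `P_θ` put mass `(1 ± s)/(2m)` on `z (k, b)`,
the larger one when `b = θ k`. A coupling of `P_θ` with any `Q` must move the mass
`P_θ{z_j} - Q(B(z_j, e))` a distance at least `e`, so
`W_r^r(P_θ, Q) ≥ (e^r/2) ∑_j |P_θ{z_j} - Q(B(z_j, e))|`. When `2 n s² ≤ m`, the `n`-sample laws
of neighbouring vertices have Bhattacharyya affinity at least `1/2`, so no estimator recovers
the coordinates of `θ` reliably, and some `P_θ` has risk at least `e^r s / 32`.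
Two opposite corners (`m = 1`, `2e = √D`, `s = (2n)^{-1/2}`) give the rate `D^{r/2} n^{-1/2}`;
`2n` points of a grid of mesh `1/M`, `M ≈ (2n)^{1/D}` (`m = n`, `s = 1/2`), give `n^{-r/D}`.
-/

open Finset Function

lemma sq_sum_sqrt_mul_le_sum_min_mul {ι : Type*} (s : Finset ι) {f g : ι → ℝ}
    (hf : ∀ i, 0 ≤ f i) (hg : ∀ i, 0 ≤ g i) :
    (∑ i ∈ s, √(f i * g i)) ^ 2 ≤ (∑ i ∈ s, min (f i) (g i)) * (∑ i ∈ s, f i + ∑ i ∈ s, g i) :=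
  calc (∑ i ∈ s, √(f i * g i)) ^ 2
      ≤ (∑ i ∈ s, min (f i) (g i)) * ∑ i ∈ s, max (f i) (g i) :=
        sum_sq_le_sum_mul_sum_of_sq_le_mul s (fun i _ => le_min (hf i) (hg i))
          (fun i _ => le_max_of_le_left (hf i)) fun i _ => by
            rw [Real.sq_sqrt (mul_nonneg (hf i) (hg i)), min_mul_max]
    _ ≤ (∑ i ∈ s, min (f i) (g i)) * (∑ i ∈ s, f i + ∑ i ∈ s, g i) := by
        rw [← sum_add_distrib]
        gcongr with i
        · exact sum_nonneg fun i _ => le_min (hf i) (hg i)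
        · exact max_le_add_of_nonneg (hf i) (hg i)

lemma one_sub_sqrt_one_sub_le {x : ℝ} (h₀ : 0 ≤ x) (h₁ : x ≤ 1) : 1 - √(1 - x) ≤ x := by
  have : 1 - x ≤ √(1 - x) := (Real.le_sqrt (by linarith) (by linarith)).mpr (by nlinarith)
  linarith

noncomputable section

/-- Assouad's hypercube of distributions on `Fin m × Bool`: the vertex `θ` tilts the uniform
distribution by `±s` on each pair `{(k, false), (k, true)}`, towards `(k, θ k)`. -/
def hypercubeWeight (m : ℕ) (s : ℝ) (θ : Fin m → Bool) (j : Fin m × Bool) : ℝ :=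
  (if θ j.1 = j.2 then 1 + s else 1 - s) / (2 * m)

def hypercubeSampleWeight (m : ℕ) (s : ℝ) {n : ℕ} (θ : Fin m → Bool)
    (ω : Fin n → Fin m × Bool) : ℝ :=
  ∏ i, hypercubeWeight m s θ (ω i)

def flipAt {m : ℕ} (θ : Fin m → Bool) (k : Fin m) : Fin m → Bool :=
  update θ k (!θ k)

def hypercubeTest {m : ℕ} (g : Fin m × Bool → ℝ) (k : Fin m) : Bool :=
  decide (g (k, false) < g (k, true))

def hypercubeTestError (m : ℕ) (s : ℝ) {n : ℕ} (t : (Fin n → Fin m × Bool) → Fin m → Bool)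
    (θ : Fin m → Bool) (k : Fin m) : ℝ :=
  ∑ ω, hypercubeSampleWeight m s θ ω * if t ω k = θ k then 0 else 1

end

section Hypercube

variable {m n : ℕ} {s : ℝ}

@[simp] lemma flipAt_self (θ : Fin m → Bool) (k : Fin m) : flipAt θ k k = !θ k :=
  update_self ..

lemma flipAt_of_ne (θ : Fin m → Bool) {k l : Fin m} (h : l ≠ k) : flipAt θ k l = θ l :=
  update_of_ne h ..

lemma flipAt_involutive (k : Fin m) : Involutive (flipAt · k) := by
  intro θ
  simp [flipAt]

lemma hypercubeWeight_nonneg (hs : |s| ≤ 1) (θ : Fin m → Bool) (j : Fin m × Bool) :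
    0 ≤ hypercubeWeight m s θ j := by
  obtain ⟨h₁, h₂⟩ := abs_le.mp hs
  exact div_nonneg (by split_ifs <;> linarith) (by positivity)

lemma hypercubeSampleWeight_nonneg (hs : |s| ≤ 1) (θ : Fin m → Bool) (ω : Fin n → Fin m × Bool) :
    0 ≤ hypercubeSampleWeight m s θ ω :=
  prod_nonneg fun i _ => hypercubeWeight_nonneg hs θ (ω i)

lemma hypercubeWeight_flipAt_of_ne (θ : Fin m → Bool) {k l : Fin m} (h : l ≠ k) (b : Bool) :
    hypercubeWeight m s (flipAt θ k) (l, b) = hypercubeWeight m s θ (l, b) := by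
  simp [hypercubeWeight, flipAt_of_ne θ h]

lemma sum_bool_hypercubeWeight (θ : Fin m → Bool) (k : Fin m) :
    ∑ b, hypercubeWeight m s θ (k, b) = 1 / m := by
  rw [Fintype.sum_bool]
  unfold hypercubeWeight
  cases θ k <;> simp <;> ring

lemma sum_hypercubeWeight (hm : m ≠ 0) (θ : Fin m → Bool) : ∑ j, hypercubeWeight m s θ j = 1 := by
  simp only [Fintype.sum_prod_type, sum_bool_hypercubeWeight, sum_const, card_univ,
    Fintype.card_fin, nsmul_eq_mul]
  field_simp

lemma sum_hypercubeSampleWeight (hm : m ≠ 0) (θ : Fin m → Bool) :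
    ∑ ω : Fin n → Fin m × Bool, hypercubeSampleWeight m s θ ω = 1 := by
  simp only [hypercubeSampleWeight, ← Fintype.sum_pow, sum_hypercubeWeight hm, one_pow]

lemma sum_sqrt_hypercubeWeight_mul_flipAt (hs : |s| ≤ 1) (θ : Fin m → Bool) (k : Fin m) :
    ∑ j, √(hypercubeWeight m s θ j * hypercubeWeight m s (flipAt θ k) j) =
      1 - (1 - √(1 - s ^ 2)) / m := by
  have hm : (m : ℝ) ≠ 0 := by exact_mod_cast k.pos.ne'
  have hpair : ∀ l, ∑ b, √(hypercubeWeight m s θ (l, b) * hypercubeWeight m s (flipAt θ k) (l, b)) =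
      1 / m - if l = k then (1 - √(1 - s ^ 2)) / m else 0 := by
    intro l
    split_ifs with h
    · subst h
      have hprod : ∀ b, hypercubeWeight m s θ (l, b) * hypercubeWeight m s (flipAt θ l) (l, b) =
          (1 - s ^ 2) / (2 * m) ^ 2 := by
        intro b
        simp only [hypercubeWeight, flipAt_self]
        cases θ l <;> cases b <;> simp <;> ring
      simp only [hprod, Fintype.sum_bool]
      rw [Real.sqrt_div' _ (sq_nonneg _), Real.sqrt_sq (by positivity)]
      ring
    · simp only [hypercubeWeight_flipAt_of_ne θ h,
        Real.sqrt_mul_self (hypercubeWeight_nonneg hs _ _), sum_bool_hypercubeWeight, sub_zero]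
  simp only [Fintype.sum_prod_type, hpair, sum_sub_distrib, sum_ite_eq', mem_univ, if_true,
    sum_const, card_univ, Fintype.card_fin, nsmul_eq_mul]
  field_simp

lemma sum_sqrt_hypercubeSampleWeight_mul_flipAt (hs : |s| ≤ 1) (θ : Fin m → Bool) (k : Fin m) :
    ∑ ω : Fin n → Fin m × Bool,
        √(hypercubeSampleWeight m s θ ω * hypercubeSampleWeight m s (flipAt θ k) ω) =
      (1 - (1 - √(1 - s ^ 2)) / m) ^ n := by
  rw [← sum_sqrt_hypercubeWeight_mul_flipAt hs θ k, Fintype.sum_pow]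
  refine sum_congr rfl fun ω _ => ?_
  rw [hypercubeSampleWeight, hypercubeSampleWeight, ← prod_mul_distrib,
    Real.sqrt_prod _ fun i _ => mul_nonneg (hypercubeWeight_nonneg hs _ _)
      (hypercubeWeight_nonneg hs _ _)]

/-- Neighbouring vertices have Bhattacharyya affinity `(1 - γ) ^ n ≥ 1 - n γ ≥ 1 / 2`, where
`γ = (1 - √(1 - s²)) / m ≤ s² / m`; Le Cam's inequality `sq_sum_sqrt_mul_le_sum_min_mul` turns
this into an overlap of at least `1 / 8`. -/
lemma one_div_eight_le_sum_min_flipAt (hs : |s| ≤ 1) (hsn : 2 * n * s ^ 2 ≤ m)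
    (θ : Fin m → Bool) (k : Fin m) :
    1 / 8 ≤ ∑ ω : Fin n → Fin m × Bool,
      min (hypercubeSampleWeight m s θ ω) (hypercubeSampleWeight m s (flipAt θ k) ω) := by
  have hm : (1 : ℝ) ≤ m := by exact_mod_cast k.pos
  have hs2 : s ^ 2 ≤ 1 := (sq_le_one_iff_abs_le_one s).mpr hs
  set γ := (1 - √(1 - s ^ 2)) / m
  have hγ : n * γ ≤ 1 / 2 := by
    have := one_sub_sqrt_one_sub_le (sq_nonneg s) hs2
    calc n * γ ≤ n * (s ^ 2 / m) := by gcongr; exact div_le_div_of_nonneg_right this (by positivity)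
      _ ≤ 1 / 2 := by rw [← mul_div_assoc, div_le_iff₀ (by linarith)]; linarith
  have hγ₁ : γ ≤ 1 := div_le_one_of_le₀ (by linarith [Real.sqrt_nonneg (1 - s ^ 2)]) (by linarith)
  have hBC : 1 / 2 ≤ (1 - γ) ^ n := by
    have := one_add_mul_le_pow (a := -γ) (by linarith) n
    rw [← sub_eq_add_neg] at this
    linarith
  have hLeCam := sq_sum_sqrt_mul_le_sum_min_mul univ (hypercubeSampleWeight_nonneg hs θ)
    (hypercubeSampleWeight_nonneg (n := n) hs (flipAt θ k))
  rw [sum_sqrt_hypercubeSampleWeight_mul_flipAt hs, sum_hypercubeSampleWeight k.pos.ne',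
    sum_hypercubeSampleWeight k.pos.ne'] at hLeCam
  nlinarith

lemma le_sum_abs_sub_hypercubeWeight (θ : Fin m → Bool) (g : Fin m × Bool → ℝ) (k : Fin m) :
    s / m * (if hypercubeTest g k = θ k then 0 else 1) ≤
      ∑ b, |hypercubeWeight m s θ (k, b) - g (k, b)| := by
  split_ifs with h
  · rw [mul_zero]
    exact sum_nonneg fun b _ => abs_nonneg _
  · have hd : (1 + s) / (2 * m) - (1 - s) / (2 * m) = s / m := by ring
    rw [mul_one, Fintype.sum_bool]
    cases hθ : θ k <;> simp only [hypercubeTest, hθ, decide_eq_true_eq, decide_eq_false_iff_not,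
      not_lt] at h <;>
      simp only [hypercubeWeight, hθ, if_true, if_false, Bool.true_eq_false, Bool.false_eq_true]
    · linarith [neg_abs_le ((1 - s) / (2 * m) - g (k, true)),
        le_abs_self ((1 + s) / (2 * m) - g (k, false))]
    · linarith [le_abs_self ((1 + s) / (2 * m) - g (k, true)),
        neg_abs_le ((1 - s) / (2 * m) - g (k, false))]

lemma sum_min_le_hypercubeTestError_add_flipAt (t : (Fin n → Fin m × Bool) → Fin m → Bool)
    (θ : Fin m → Bool) (k : Fin m) :
    ∑ ω : Fin n → Fin m × Bool,
        min (hypercubeSampleWeight m s θ ω) (hypercubeSampleWeight m s (flipAt θ k) ω) ≤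
      hypercubeTestError m s t θ k + hypercubeTestError m s t (flipAt θ k) k := by
  rw [hypercubeTestError, hypercubeTestError, ← sum_add_distrib]
  refine sum_le_sum fun ω _ => ?_
  rw [flipAt_self]
  cases t ω k <;> cases θ k <;> simp

lemma sum_hypercubeTestError_ge (hs : |s| ≤ 1) (hsn : 2 * n * s ^ 2 ≤ m)
    (t : (Fin n → Fin m × Bool) → Fin m → Bool) (k : Fin m) :
    2 ^ m / 16 ≤ ∑ θ, hypercubeTestError m s t θ k := by
  have hflip : ∑ θ, hypercubeTestError m s t (flipAt θ k) k = ∑ θ, hypercubeTestError m s t θ k :=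
    (flipAt_involutive k).bijective.sum_comp (hypercubeTestError m s t · k)
  have h := sum_le_sum fun θ (_ : θ ∈ univ) => (one_div_eight_le_sum_min_flipAt hs hsn θ k).trans
    (sum_min_le_hypercubeTestError_add_flipAt t θ k)
  rw [sum_add_distrib, hflip, sum_const, card_univ, Fintype.card_fun, Fintype.card_bool,
    Fintype.card_fin, nsmul_eq_mul] at h
  push_cast at h
  linarith

lemma mul_sum_hypercubeTestError_le (hs : |s| ≤ 1)
    (g : (Fin n → Fin m × Bool) → Fin m × Bool → ℝ) (θ : Fin m → Bool) :
    s / m * ∑ k, hypercubeTestError m s (fun ω => hypercubeTest (g ω)) θ k ≤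
      ∑ ω, hypercubeSampleWeight m s θ ω * ∑ j, |hypercubeWeight m s θ j - g ω j| := by
  simp only [hypercubeTestError, mul_sum]
  rw [sum_comm]
  refine sum_le_sum fun ω _ => ?_
  rw [Fintype.sum_prod_type]
  refine sum_le_sum fun k _ => ?_
  rw [← mul_sum, mul_left_comm]
  exact mul_le_mul_of_nonneg_left (le_sum_abs_sub_hypercubeWeight θ (g ω) k)
    (hypercubeSampleWeight_nonneg hs θ ω)

/-- Assouad's lemma for the hypercube `hypercubeWeight m s`. -/
theorem exists_le_sum_hypercubeSampleWeight_mul_sum_abs_sub (hm : m ≠ 0) (hs₀ : 0 ≤ s)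
    (hs₁ : s ≤ 1) (hsn : 2 * n * s ^ 2 ≤ m) (g : (Fin n → Fin m × Bool) → Fin m × Bool → ℝ) :
    ∃ θ : Fin m → Bool, s / 16 ≤
      ∑ ω, hypercubeSampleWeight m s θ ω * ∑ j, |hypercubeWeight m s θ j - g ω j| := by
  have hs : |s| ≤ 1 := abs_le.mpr ⟨by linarith, hs₁⟩
  set t := fun ω => hypercubeTest (g ω)
  have hsum : ∑ _θ : Fin m → Bool, s / 16 ≤
      ∑ θ, ∑ ω, hypercubeSampleWeight m s θ ω * ∑ j, |hypercubeWeight m s θ j - g ω j| :=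
    calc ∑ _θ : Fin m → Bool, s / 16 = s / m * ∑ _k : Fin m, (2 ^ m / 16 : ℝ) := by
          simp only [sum_const, card_univ, Fintype.card_fun, Fintype.card_bool,
            Fintype.card_fin, nsmul_eq_mul]
          push_cast
          field_simp
      _ ≤ s / m * ∑ k, ∑ θ, hypercubeTestError m s t θ k := by
          gcongr with k
          exact sum_hypercubeTestError_ge hs hsn t k
      _ = ∑ θ, s / m * ∑ k, hypercubeTestError m s t θ k := by rw [sum_comm, mul_sum]
      _ ≤ _ := sum_le_sum fun θ _ => mul_sum_hypercubeTestError_le hs g θ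
  obtain ⟨θ, -, hθ⟩ := exists_le_of_sum_le univ_nonempty hsum
  exact ⟨θ, hθ⟩

end Hypercube

lemma sum_abs_sub_le_two_mul_sum_max {ι : Type*} (s : Finset ι) {a b : ι → ℝ}
    (h : ∑ i ∈ s, b i ≤ ∑ i ∈ s, a i) :
    ∑ i ∈ s, |a i - b i| ≤ 2 * ∑ i ∈ s, max (a i - b i) 0 := by
  have habs : ∀ i, |a i - b i| = 2 * max (a i - b i) 0 - (a i - b i) := fun i => by
    rcases le_total (a i - b i) 0 with hi | hi
    · rw [abs_of_nonpos hi, max_eq_right hi]; ring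
    · rw [abs_of_nonneg hi, max_eq_left hi]; ring
  simp only [habs, sum_sub_distrib, ← mul_sum]
  linarith

lemma mul_measure_le_lintegral_of_forall_le {α : Type*} [MeasurableSpace α] {μ : Measure α}
    {S : Set α} (hS : MeasurableSet S) {c : ℝ≥0∞} {f : α → ℝ≥0∞} (h : ∀ x ∈ S, c ≤ f x) :
    c * μ S ≤ ∫⁻ x, f x ∂μ :=
  calc c * μ S = ∫⁻ _ in S, c ∂μ := (setLIntegral_const S c).symm
    _ ≤ ∫⁻ x in S, f x ∂μ := setLIntegral_mono' hS h
    _ ≤ ∫⁻ x, f x ∂μ := setLIntegral_le_lintegral S f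

lemma sub_le_measure_prod_compl {Ω : Type*} [MeasurableSpace Ω] {P Q : Measure Ω}
    {μ : Measure (Ω × Ω)} (hμ : μ ∈ couplings P Q) {A : Set Ω} (hA : MeasurableSet A)
    (B : Set Ω) : P A - Q B ≤ μ (A ×ˢ Bᶜ) := by
  obtain ⟨hP, hQ⟩ := hμ
  rw [tsub_le_iff_left, ← hP, Measure.map_apply measurable_fst hA]
  calc μ (Prod.fst ⁻¹' A) ≤ μ (Prod.snd ⁻¹' B) + μ (A ×ˢ Bᶜ) := by
        refine (measure_mono fun p hp => ?_).trans (measure_union_le _ _)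
        by_cases h : p.2 ∈ B
        exacts [Or.inl h, Or.inr ⟨hp, h⟩]
    _ ≤ Q B + μ (A ×ˢ Bᶜ) := by
        rw [← hQ]
        gcongr
        exact Measure.le_map_apply measurable_snd.aemeasurable B

noncomputable section

def discreteMeasure {Ω J : Type*} [MeasurableSpace Ω] [Fintype J] (z : J → Ω) (w : J → ℝ) :
    Measure Ω :=
  ∑ j, ENNReal.ofReal (w j) • Measure.dirac (z j)

def wassersteinRisk {Ω : Type*} [MeasurableSpace Ω] [PseudoEMetricSpace Ω] (r : ℝ) {n : ℕ}
    (est : (Fin n → Ω) → Measure Ω) : ℝ≥0∞ :=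
  ⨆ (P : Measure Ω) (_ : IsProbabilityMeasure P),
    ∫⁻ x, wassersteinPow r P (est x) ∂(Measure.pi fun _ : Fin n => P)

end

section DiscreteMeasure

variable {Ω J : Type*} [MeasurableSpace Ω] [Fintype J] {z : J → Ω} {w : J → ℝ}

lemma discreteMeasure_apply (z : J → Ω) (w : J → ℝ) {A : Set Ω} (hA : MeasurableSet A) :
    discreteMeasure z w A = ∑ j, ENNReal.ofReal (w j) * A.indicator 1 (z j) := by
  simp [discreteMeasure, Measure.finsetSum_apply, Measure.dirac_apply' _ hA]

lemma discreteMeasure_singleton [MeasurableSingletonClass Ω] (hz : Injective z)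
    (j : J) : discreteMeasure z w {z j} = ENNReal.ofReal (w j) := by
  rw [discreteMeasure_apply z w (measurableSet_singleton _), sum_eq_single j]
  · simp
  · intro l _ hl
    simp [hz.ne hl]
  · simp

lemma isProbabilityMeasure_discreteMeasure (hw₀ : ∀ j, 0 ≤ w j) (hw₁ : ∑ j, w j = 1) :
    IsProbabilityMeasure (discreteMeasure z w) := by
  constructor
  simp only [discreteMeasure_apply z w MeasurableSet.univ, Set.indicator_univ, Pi.one_apply,
    mul_one]
  rw [← ENNReal.ofReal_sum_of_nonneg fun j _ => hw₀ j, hw₁, ENNReal.ofReal_one]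

lemma lintegral_discreteMeasure [MeasurableSingletonClass Ω] (z : J → Ω) (w : J → ℝ)
    (f : Ω → ℝ≥0∞) : ∫⁻ x, f x ∂(discreteMeasure z w) = ∑ j, ENNReal.ofReal (w j) * f (z j) := by
  simp [discreteMeasure]

lemma pi_discreteMeasure {n : ℕ} (hw₀ : ∀ j, 0 ≤ w j) (hw₁ : ∑ j, w j = 1) :
    Measure.pi (fun _ : Fin n => discreteMeasure z w) =
      discreteMeasure (fun ω : Fin n → J => z ∘ ω) fun ω => ∏ i, w (ω i) := by
  have : IsProbabilityMeasure (discreteMeasure z w) := isProbabilityMeasure_discreteMeasure hw₀ hw₁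
  refine Measure.pi_eq fun A hA => ?_
  simp only [discreteMeasure_apply _ _ (MeasurableSet.univ_pi hA), discreteMeasure_apply _ _ (hA _),
    prod_univ_sum, Fintype.piFinset_univ]
  refine sum_congr rfl fun ω _ => ?_
  rw [prod_mul_distrib, ← ENNReal.ofReal_prod_of_nonneg fun i _ => hw₀ (ω i), ← coe_univ,
    Set.indicator_pi_one_apply]
  rfl

end DiscreteMeasure

lemma sum_toReal_measure_le_one {α ι : Type*} [MeasurableSpace α] [Fintype ι] {Q : Measure α}
    [IsProbabilityMeasure Q] {B : ι → Set α} (hB : Pairwise (Disjoint on B))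
    (hBm : ∀ j, MeasurableSet (B j)) : ∑ j, (Q (B j)).toReal ≤ 1 := by
  have hU : ∑ j, Q (B j) = Q (⋃ j, B j) := by rw [measure_iUnion hB hBm, tsum_fintype]
  rw [← ENNReal.toReal_sum fun j _ => measure_ne_top Q _, hU]
  exact ENNReal.toReal_le_of_le_ofReal zero_le_one (by simpa using prob_le_one)

lemma injective_of_pairwise_le_edist {Ω J : Type*} [PseudoEMetricSpace Ω] {z : J → Ω}
    {ε : ℝ≥0∞} (hε : ε ≠ 0) (h : Pairwise fun j l => ε ≤ edist (z j) (z l)) : Injective z :=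
  fun j l hjl => not_not.mp fun hne => hε <| nonpos_iff_eq_zero.mp (by simpa [hjl] using h hne)

section Transport

variable {Ω J : Type*} [MeasurableSpace Ω] [PseudoEMetricSpace Ω] [OpensMeasurableSpace Ω]
  [MeasurableSingletonClass Ω] [Fintype J] {r e : ℝ} {z : J → Ω} {w : J → ℝ}

/-- Since `∑ Q (B j) ≤ 1 = ∑ w j`, the positive parts `(w j - Q (B j))⁺` make up at least half
of `∑ |w j - Q (B j)|`, and a coupling moves each of them out of `z j` by at least `e`. -/
lemma lintegral_edist_rpow_ge_of_separated (hr : 0 ≤ r) (he : 0 < e)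
    (hsep : Pairwise fun j l => ENNReal.ofReal (2 * e) ≤ edist (z j) (z l))
    (hw₁ : ∑ j, w j = 1) {Q : Measure Ω} [IsProbabilityMeasure Q]
    {μ : Measure (Ω × Ω)} (hμ : μ ∈ couplings (discreteMeasure z w) Q) :
    ENNReal.ofReal (e ^ r / 2 * ∑ j, |w j - (Q (Metric.eball (z j) (ENNReal.ofReal e))).toReal|)
      ≤ ∫⁻ p, edist p.1 p.2 ^ r ∂μ := by
  set ε := ENNReal.ofReal e
  set B := fun j => Metric.eball (z j) ε
  set E := fun j => {z j} ×ˢ (B j)ᶜ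
  have h2ε : ENNReal.ofReal (2 * e) = ε + ε := by rw [two_mul, ENNReal.ofReal_add he.le he.le]
  have hz : Injective z :=
    injective_of_pairwise_le_edist (ENNReal.ofReal_pos.mpr (by positivity)).ne' hsep
  have hB : Pairwise (Disjoint on B) := fun j l h => Metric.eball_disjoint (h2ε ▸ hsep h)
  have hBm : ∀ j, MeasurableSet (B j) := fun j => Metric.isOpen_eball.measurableSet
  have hE : Pairwise (Disjoint on E) := fun j l h =>
    Set.disjoint_prod.mpr (Or.inl (Set.disjoint_singleton.mpr (hz.ne h)))
  have hEm : ∀ j, MeasurableSet (E j) := fun j => (measurableSet_singleton _).prod (hBm j).compl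
  have hEfar : ∀ p ∈ ⋃ j, E j, ε ^ r ≤ edist p.1 p.2 ^ r := by
    simp only [E, B, Set.mem_iUnion, Set.mem_prod, Set.mem_singleton_iff, Set.mem_compl_iff,
      Metric.mem_eball, not_lt]
    rintro p ⟨j, hp₁, hp₂⟩
    rw [hp₁, edist_comm]
    gcongr
  have hQB : ∑ j, (Q (B j)).toReal ≤ ∑ j, w j := hw₁ ▸ sum_toReal_measure_le_one hB hBm
  have hEj : ∀ j, ENNReal.ofReal (max (w j - (Q (B j)).toReal) 0) ≤ μ (E j) := fun j => by
    rw [ENNReal.ofReal_max, ENNReal.ofReal_zero, max_eq_left zero_le,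
      ENNReal.ofReal_sub _ ENNReal.toReal_nonneg, ENNReal.ofReal_toReal (measure_ne_top Q _),
      ← discreteMeasure_singleton hz j]
    exact sub_le_measure_prod_compl hμ (measurableSet_singleton _) _
  calc ENNReal.ofReal (e ^ r / 2 * ∑ j, |w j - (Q (B j)).toReal|)
      ≤ ENNReal.ofReal (e ^ r * ∑ j, max (w j - (Q (B j)).toReal) 0) := by
        refine ENNReal.ofReal_le_ofReal ?_
        have := mul_le_mul_of_nonneg_left (sum_abs_sub_le_two_mul_sum_max univ hQB)
          (Real.rpow_nonneg he.le r)
        linarith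
    _ = ε ^ r * ∑ j, ENNReal.ofReal (max (w j - (Q (B j)).toReal) 0) := by
        rw [ENNReal.ofReal_mul (Real.rpow_nonneg he.le r), ENNReal.ofReal_rpow_of_pos he,
          ENNReal.ofReal_sum_of_nonneg fun j _ => le_max_right _ _]
    _ ≤ ε ^ r * μ (⋃ j, E j) := by
        rw [measure_iUnion hE hEm, tsum_fintype]
        gcongr with j
        exact hEj j
    _ ≤ ∫⁻ p, edist p.1 p.2 ^ r ∂μ :=
        mul_measure_le_lintegral_of_forall_le (MeasurableSet.iUnion hEm) hEfar

lemma lintegral_wassersteinPow_discreteMeasure_ge (hr : 0 ≤ r) (he : 0 < e)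
    (hsep : Pairwise fun j l => ENNReal.ofReal (2 * e) ≤ edist (z j) (z l))
    (hw₀ : ∀ j, 0 ≤ w j) (hw₁ : ∑ j, w j = 1) {n : ℕ} (est : (Fin n → Ω) → Measure Ω)
    (hest : ∀ x, IsProbabilityMeasure (est x)) :
    ENNReal.ofReal (e ^ r / 2 * ∑ ω : Fin n → J, (∏ i, w (ω i)) *
        ∑ j, |w j - (est (z ∘ ω) (Metric.eball (z j) (ENNReal.ofReal e))).toReal|)
      ≤ ∫⁻ x, wassersteinPow r (discreteMeasure z w) (est x)
          ∂(Measure.pi fun _ : Fin n => discreteMeasure z w) := by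
  rw [pi_discreteMeasure hw₀ hw₁, lintegral_discreteMeasure, mul_sum,
    ENNReal.ofReal_sum_of_nonneg fun ω _ => by
      have := Real.rpow_nonneg he.le r
      have := prod_nonneg fun i (_ : i ∈ univ) => hw₀ (ω i)
      positivity]
  refine sum_le_sum fun ω _ => ?_
  rw [mul_left_comm, ENNReal.ofReal_mul (prod_nonneg fun i _ => hw₀ (ω i))]
  gcongr
  exact le_iInf₂ fun μ hμ => lintegral_edist_rpow_ge_of_separated hr he hsep hw₁ hμ

end Transport

namespace unitCube

def mk {D : ℕ} (v : Fin D → ℝ) (hv : ∀ i, v i ∈ Set.Icc (0 : ℝ) 1) : unitCube D :=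
  ⟨WithLp.toLp 2 v, hv⟩

lemma dist_mk {D : ℕ} {v v' : Fin D → ℝ} (hv : ∀ i, v i ∈ Set.Icc (0 : ℝ) 1)
    (hv' : ∀ i, v' i ∈ Set.Icc (0 : ℝ) 1) :
    dist (mk v hv) (mk v' hv') = dist (WithLp.toLp 2 v) (WithLp.toLp 2 v') :=
  rfl

def corner (D : ℕ) (b : Bool) : unitCube D :=
  mk (fun _ => if b then 1 else 0) fun _ => by split_ifs <;> simp

lemma dist_corner_of_ne (D : ℕ) {b b' : Bool} (h : b ≠ b') :
    dist (corner D b) (corner D b') = √D := by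
  cases b <;> cases b' <;> simp_all [corner, dist_mk, EuclideanSpace.dist_eq]

noncomputable def gridPoint {D M : ℕ} (κ : Fin D → Fin M) : unitCube D :=
  mk (fun i => (κ i : ℝ) / M) fun i =>
    ⟨by positivity, div_le_one_of_le₀ (by exact_mod_cast (κ i).is_lt.le) (Nat.cast_nonneg M)⟩

lemma one_div_le_dist_gridPoint {D M : ℕ} {κ κ' : Fin D → Fin M} (h : κ ≠ κ') :
    1 / (M : ℝ) ≤ dist (gridPoint κ) (gridPoint κ') := by
  obtain ⟨i, hi⟩ := ne_iff.mp h
  have hM : (0 : ℝ) < M := by exact_mod_cast (κ i).pos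
  have hgap : (1 : ℝ) ≤ |(κ i : ℝ) - κ' i| := by
    have : ((κ i : ℕ) : ℤ) - (κ' i : ℕ) ≠ 0 :=
      sub_ne_zero.mpr (by exact_mod_cast Fin.val_ne_of_ne hi)
    exact_mod_cast Int.one_le_abs this
  calc 1 / (M : ℝ) ≤ |(κ i : ℝ) - κ' i| / M := by gcongr
    _ = dist ((κ i : ℝ) / M) ((κ' i : ℝ) / M) := by
        rw [Real.dist_eq, ← sub_div, abs_div, abs_of_pos hM]
    _ ≤ dist (gridPoint κ) (gridPoint κ') :=
        PiLp.dist_apply_le (WithLp.toLp 2 fun i => (κ i : ℝ) / M)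
          (WithLp.toLp 2 fun i => (κ' i : ℝ) / M) i

end unitCube

theorem le_wassersteinRisk_of_separated {Ω : Type*} [MeasurableSpace Ω] [PseudoEMetricSpace Ω]
    [OpensMeasurableSpace Ω] [MeasurableSingletonClass Ω] {r e s : ℝ} {m n : ℕ} (hr : 0 ≤ r)
    (hm : m ≠ 0) {z : Fin m × Bool → Ω} (he : 0 < e)
    (hsep : Pairwise fun j l => ENNReal.ofReal (2 * e) ≤ edist (z j) (z l))
    (hs₀ : 0 ≤ s) (hs₁ : s ≤ 1) (hsn : 2 * n * s ^ 2 ≤ m)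
    (est : (Fin n → Ω) → Measure Ω) (hest : ∀ x, IsProbabilityMeasure (est x)) :
    ENNReal.ofReal (e ^ r * s / 32) ≤ wassersteinRisk r est := by
  obtain ⟨θ, hθ⟩ := exists_le_sum_hypercubeSampleWeight_mul_sum_abs_sub hm hs₀ hs₁ hsn
    fun ω j => (est (z ∘ ω) (Metric.eball (z j) (ENNReal.ofReal e))).toReal
  have hw₀ := hypercubeWeight_nonneg (abs_le.mpr ⟨by linarith, hs₁⟩) θ
  have hw₁ := sum_hypercubeWeight (s := s) hm θ
  refine le_trans ?_ (le_iSup₂_of_le _ (isProbabilityMeasure_discreteMeasure (z := z) hw₀ hw₁)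
    (lintegral_wassersteinPow_discreteMeasure_ge hr he hsep hw₀ hw₁ est hest))
  refine ENNReal.ofReal_le_ofReal ?_
  calc e ^ r * s / 32 = e ^ r / 2 * (s / 16) := by ring
    _ ≤ _ := by gcongr; exact hθ

section UnitCube

variable {r : ℝ} {D n : ℕ}

theorem le_wassersteinRisk_unitCube_of_corners (hr : 0 ≤ r) (hD : 0 < D) (hn : 0 < n)
    (est : (Fin n → unitCube D) → Measure (unitCube D))
    (hest : ∀ x, IsProbabilityMeasure (est x)) :
    ENNReal.ofReal (8 ^ (-r) / 64 * ((D : ℝ) ^ (r / 2) * (n : ℝ) ^ (-(1 : ℝ) / 2))) ≤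
      wassersteinRisk r est := by
  have hDpos : (0 : ℝ) < D := by exact_mod_cast hD
  have hnpos : (0 : ℝ) < n := by exact_mod_cast hn
  have hsep : Pairwise fun j l : Fin 1 × Bool =>
      ENNReal.ofReal (2 * (√D / 2)) ≤ edist (unitCube.corner D j.2) (unitCube.corner D l.2) := by
    rintro ⟨j, b⟩ ⟨l, b'⟩ h
    obtain rfl : j = l := Subsingleton.elim j l
    rw [mul_div_cancel₀ _ two_ne_zero, edist_dist,
      unitCube.dist_corner_of_ne D fun hb : b = b' => h (hb ▸ rfl)]
  have hs : 2 * n * (1 / √(2 * n)) ^ 2 ≤ ((1 : ℕ) : ℝ) := by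
    rw [div_pow, Real.sq_sqrt (by positivity)]
    field_simp
    simp
  refine le_trans (ENNReal.ofReal_le_ofReal ?_) (le_wassersteinRisk_of_separated hr one_ne_zero
    (by positivity) hsep (by positivity) ?_ hs est hest)
  · have h8 : (8 : ℝ) ^ (-r) ≤ (2 ^ r)⁻¹ := by
      rw [Real.rpow_neg (by norm_num)]
      exact inv_anti₀ (by positivity) (Real.rpow_le_rpow (by norm_num) (by norm_num) hr)
    have hD' : (√D / 2) ^ r = D ^ (r / 2) * (2 ^ r)⁻¹ := by
      rw [Real.div_rpow (Real.sqrt_nonneg _) zero_le_two, Real.sqrt_eq_rpow,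
        ← Real.rpow_mul hDpos.le, div_eq_mul_inv]
      ring_nf
    have hn' : (n : ℝ) ^ (-(1 : ℝ) / 2) / 2 ≤ 1 / √(2 * n) := by
      have h2 : √2 ≤ 2 := by nlinarith [Real.sq_sqrt zero_le_two, Real.sqrt_nonneg 2]
      rw [neg_div, Real.rpow_neg hnpos.le, ← Real.sqrt_eq_rpow, Real.sqrt_mul zero_le_two,
        one_div, mul_inv, div_eq_mul_inv, mul_comm]
      gcongr
    calc 8 ^ (-r) / 64 * ((D : ℝ) ^ (r / 2) * (n : ℝ) ^ (-(1 : ℝ) / 2))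
        ≤ (2 ^ r)⁻¹ / 64 * ((D : ℝ) ^ (r / 2) * (n : ℝ) ^ (-(1 : ℝ) / 2)) := by gcongr
      _ = D ^ (r / 2) * (2 ^ r)⁻¹ * ((n : ℝ) ^ (-(1 : ℝ) / 2) / 2) / 32 := by ring
      _ ≤ (√D / 2) ^ r * (1 / √(2 * n)) / 32 := by rw [hD']; gcongr
  · have : (1 : ℝ) ≤ n := by exact_mod_cast hn
    rw [div_le_one (by positivity), Real.one_le_sqrt]
    linarith

lemma exists_grid_size (hD : 0 < D) (hn : 0 < n) :
    ∃ M : ℕ, 0 < M ∧ 2 * n ≤ M ^ D ∧ (M : ℝ) ≤ 4 * (n : ℝ) ^ (D⁻¹ : ℝ) := by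
  set x : ℝ := (2 * n : ℝ) ^ (D⁻¹ : ℝ)
  have hn₁ : (1 : ℝ) ≤ n := by exact_mod_cast hn
  have hD₁ : (D⁻¹ : ℝ) ≤ 1 := inv_le_one_of_one_le₀ (by exact_mod_cast hD)
  have hroot : (1 : ℝ) ≤ (n : ℝ) ^ (D⁻¹ : ℝ) := Real.one_le_rpow hn₁ (by positivity)
  have hx : x ≤ 2 * (n : ℝ) ^ (D⁻¹ : ℝ) := by
    rw [show x = (2 * n : ℝ) ^ (D⁻¹ : ℝ) from rfl, Real.mul_rpow zero_le_two (by positivity)]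
    gcongr
    exact Real.rpow_le_self_of_one_le one_le_two hD₁
  have hxD : (2 * n : ℝ) ≤ (⌈x⌉₊ : ℝ) ^ D := by
    rw [← Real.rpow_inv_natCast_pow (by positivity : (0 : ℝ) ≤ 2 * n) hD.ne']
    gcongr
    exact Nat.le_ceil x
  refine ⟨⌈x⌉₊, Nat.ceil_pos.mpr (by positivity), by exact_mod_cast hxD, ?_⟩
  linarith [Nat.ceil_lt_add_one (by positivity : 0 ≤ x)]

theorem le_wassersteinRisk_unitCube_of_grid (hr : 0 ≤ r) (hD : 0 < D) (hn : 0 < n)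
    (est : (Fin n → unitCube D) → Measure (unitCube D))
    (hest : ∀ x, IsProbabilityMeasure (est x)) :
    ENNReal.ofReal (8 ^ (-r) / 64 * (n : ℝ) ^ (-(r / D))) ≤ wassersteinRisk r est := by
  obtain ⟨M, hM, hMn, hMle⟩ := exists_grid_size hD hn
  have hcard : Fintype.card (Fin n × Bool) ≤ Fintype.card (Fin D → Fin M) := by
    simp only [Fintype.card_prod, Fintype.card_fin, Fintype.card_bool, Fintype.card_fun]
    linarith
  obtain ⟨ι⟩ := Embedding.nonempty_of_card_le hcard
  have hMpos : (0 : ℝ) < M := by exact_mod_cast hM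
  have hnpos : (0 : ℝ) < n := by exact_mod_cast hn
  have hsep : Pairwise fun j l => ENNReal.ofReal (2 * (1 / (2 * M))) ≤
      edist (unitCube.gridPoint (ι j)) (unitCube.gridPoint (ι l)) := fun j l h => by
    dsimp only
    rw [edist_dist, show 2 * (1 / (2 * (M : ℝ))) = 1 / M by field_simp]
    exact ENNReal.ofReal_le_ofReal (unitCube.one_div_le_dist_gridPoint (ι.injective.ne h))
  refine le_trans (ENNReal.ofReal_le_ofReal ?_)
    (le_wassersteinRisk_of_separated (s := 1 / 2) hr hn.ne'
    (by positivity) hsep (by norm_num) (by norm_num) (by nlinarith) est hest)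
  have hmesh : (8 : ℝ)⁻¹ * (n : ℝ) ^ (-(D⁻¹ : ℝ)) ≤ 1 / (2 * M) := by
    rw [Real.rpow_neg hnpos.le, ← mul_inv, one_div]
    exact inv_anti₀ (by positivity) (by linarith)
  calc 8 ^ (-r) / 64 * (n : ℝ) ^ (-(r / D))
      = ((8 : ℝ)⁻¹ * (n : ℝ) ^ (-(D⁻¹ : ℝ))) ^ r / 64 := by
        rw [Real.mul_rpow (by norm_num) (by positivity), Real.inv_rpow (by norm_num),
          ← Real.rpow_neg (by norm_num), ← Real.rpow_mul hnpos.le]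
        ring_nf
    _ ≤ (1 / (2 * M)) ^ r / 64 := by gcongr
    _ = (1 / (2 * M)) ^ r * (1 / 2) / 32 := by ring

end UnitCube

/-- Example 2 (lower bound): minimax lower bound for distribution estimation on the unit
cube `[0,1]^D` in `W_r^r` loss, with a constant depending only on `r`. -/
theorem stmt_12 (r : ℝ) (hr : 1 ≤ r) :
    ∃ c : ℝ, 0 < c ∧
      ∀ D : ℕ, 0 < D → ∀ n : ℕ, 2 ≤ n →
        ∀ est : (Fin n → unitCube D) → MeasureTheory.Measure (unitCube D),
          Measurable est → (∀ x, MeasureTheory.IsProbabilityMeasure (est x)) →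
          ENNReal.ofReal (c * max ((n : ℝ) ^ (-(r / D))) ((D : ℝ) ^ (r / 2) * (n : ℝ) ^ (-(1 : ℝ) / 2)))
            ≤ ⨆ (P : MeasureTheory.Measure (unitCube D))
                (_ : MeasureTheory.IsProbabilityMeasure P),
                ∫⁻ x, wassersteinPow r P (est x)
                  ∂(MeasureTheory.Measure.pi fun _ : Fin n => P) := by
  have hr₀ : 0 ≤ r := by linarith
  refine ⟨8 ^ (-r) / 64, by positivity, fun D hD n hn est _ hest => ?_⟩
  rw [mul_max_of_nonneg _ _ (by positivity), ENNReal.ofReal_max]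
  exact max_le (le_wassersteinRisk_unitCube_of_grid hr₀ hD (by omega) est hest)
    (le_wassersteinRisk_unitCube_of_corners hr₀ hD (by omega) est hest)
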